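/- For δ ∈ [0, 1/2], the maximum over real numbers r_x, r_z with r_x² + r_z² ≤ 1 of the function F(r_x, r_z) = (1/2)[(1/2+δ)²(1+r_z) + (1/2+δ)(1/2−δ)(2+r_x−r_z) + (1/2−δ)²(1−r_x)] equals 1/2 + δ·√((1+4δ²)/2), and is attained at r_x = (1−2δ)/√(2+8δ²), r_z = (1+2δ)/√(2+8δ²). -/

import Mathlib

open Matrix Complex BigOperators

noncomputable section

abbrev Qubit := Fin 2 → ℂ
abbrev TwoQubit := Fin 2 × Fin 2 → ℂ

def ket0 : Qubit := ![1, 0]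
def ket1 : Qubit := ![0, 1]
def ketP : Qubit := ((Real.sqrt 2 : ℝ) : ℂ)⁻¹ • ![1, 1]
def ketM : Qubit := ((Real.sqrt 2 : ℝ) : ℂ)⁻¹ • ![1, -1]

/-- Tensor product of two single-qubit state vectors. -/
def tens (v w : Qubit) : TwoQubit := fun p => v p.1 * w p.2

def PhiP : TwoQubit := ((Real.sqrt 2 : ℝ) : ℂ)⁻¹ • (tens ket0 ket0 + tens ket1 ket1)
def PhiM : TwoQubit := ((Real.sqrt 2 : ℝ) : ℂ)⁻¹ • (tens ket0 ket0 - tens ket1 ket1)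
def PsiP : TwoQubit := ((Real.sqrt 2 : ℝ) : ℂ)⁻¹ • (tens ket0 ket1 + tens ket1 ket0)
def PsiM : TwoQubit := ((Real.sqrt 2 : ℝ) : ℂ)⁻¹ • (tens ket0 ket1 - tens ket1 ket0)

/-- Outer product |v⟩⟨w|. -/
def outer {α : Type*} [Fintype α] (v w : α → ℂ) : Matrix α α ℂ :=
  Matrix.of fun i j => v i * star (w j)

/-- Partial trace over the second qubit. -/
def ptr2 (ρ : Matrix (Fin 2 × Fin 2) (Fin 2 × Fin 2) ℂ) : Matrix (Fin 2) (Fin 2) ℂ :=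
  Matrix.of fun i j => ∑ k : Fin 2, ρ (i, k) (j, k)

/-- Partial trace over the first qubit. -/
def ptr1 (ρ : Matrix (Fin 2 × Fin 2) (Fin 2 × Fin 2) ℂ) : Matrix (Fin 2) (Fin 2) ℂ :=
  Matrix.of fun i j => ∑ k : Fin 2, ρ (k, i) (k, j)

/-- Tensor (Kronecker) product of two single-qubit operators. -/
def tensM (A B : Matrix (Fin 2) (Fin 2) ℂ) : Matrix (Fin 2 × Fin 2) (Fin 2 × Fin 2) ℂ :=
  Matrix.of fun p q => A p.1 q.1 * B p.2 q.2

/-- Inner product ⟨v|w⟩. -/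
def inn {α : Type*} [Fintype α] (v w : α → ℂ) : ℂ := ∑ i, star (v i) * w i

/-- The biased Bell-state mixture (1/2+δ)|Φ⁺⟩⟨Φ⁺| + (1/2−δ)|Ψ⁻⟩⟨Ψ⁻|. -/
def rhoMix (δ : ℝ) : Matrix (Fin 2 × Fin 2) (Fin 2 × Fin 2) ℂ :=
  ((1/2 + δ : ℝ) : ℂ) • outer PhiP PhiP + ((1/2 - δ : ℝ) : ℂ) • outer PsiM PsiM


/-- Bob's winning probability as a function of the bias δ and the Bloch-vector
components (r_x, r_z) of his state. -/
def Fwin (δ rx rz : ℝ) : ℝ :=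
  (1/2) * ((1/2 + δ)^2 * (1 + rz) + (1/2 + δ) * (1/2 - δ) * (2 + rx - rz)
    + (1/2 - δ)^2 * (1 - rx))

/-- The maximum of Fwin over the unit disk r_x² + r_z² ≤ 1 equals
1/2 + δ√((1+4δ²)/2), attained at the stated optimal Bloch vector. -/
theorem Fwin_max (δ : ℝ) (h0 : 0 ≤ δ) (h1 : δ ≤ 1/2) :
    ((1 - 2*δ)/Real.sqrt (2 + 8*δ^2))^2 + ((1 + 2*δ)/Real.sqrt (2 + 8*δ^2))^2 ≤ 1 ∧
    Fwin δ ((1 - 2*δ)/Real.sqrt (2 + 8*δ^2)) ((1 + 2*δ)/Real.sqrt (2 + 8*δ^2))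
      = 1/2 + δ * Real.sqrt ((1 + 4*δ^2)/2) ∧
    ∀ rx rz : ℝ, rx^2 + rz^2 ≤ 1 →
      Fwin δ rx rz ≤ 1/2 + δ * Real.sqrt ((1 + 4*δ^2)/2) := by
  have hs2 : (0:ℝ) < 2 + 8*δ^2 := by positivity
  have hs0 : (0:ℝ) < Real.sqrt (2 + 8*δ^2) := Real.sqrt_pos.mpr hs2
  have hs : (Real.sqrt (2 + 8*δ^2))^2 = 2 + 8*δ^2 := Real.sq_sqrt hs2.le
  set s := Real.sqrt (2 + 8*δ^2) with hsdef
  have ht2 : (0:ℝ) ≤ (1 + 4*δ^2)/2 := by positivity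
  have ht : (Real.sqrt ((1 + 4*δ^2)/2))^2 = (1 + 4*δ^2)/2 := Real.sq_sqrt ht2
  set t := Real.sqrt ((1 + 4*δ^2)/2) with htdef
  have ht0 : 0 ≤ t := Real.sqrt_nonneg _
  have hts : t = (1 + 4*δ^2)/s := by
    rw [htdef, show (1+4*δ^2)/2 = ((1+4*δ^2)/s)^2 from by field_simp; nlinarith [hs]]
    exact Real.sqrt_sq (by positivity)
  refine ⟨?_, ?_, ?_⟩
  · rw [div_pow, div_pow, ← add_div, div_le_one (by positivity)]
    nlinarith
  · unfold Fwin
    rw [hts]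
    field_simp
    ring_nf
  · intro rx rz hr
    unfold Fwin
    have key : (1/2 + δ) * rz + (1/2 - δ) * rx ≤ t := by
      nlinarith [sq_nonneg ((1/2 + δ) * rx - (1/2 - δ) * rz),
        sq_nonneg (((1/2 + δ) * rz + (1/2 - δ) * rx) - t), sq_nonneg t, ht]
    nlinarith [mul_le_mul_of_nonneg_left key h0]
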